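/- arXiv:2102.06708 — 4 statements merged into one kernel-verified Lean document; each statement's English description precedes it below -/
import Mathlib

section
/- Let σ₁ be an m×m and σ₂ a p×p positive definite Hermitian complex matrix. Then log(σ₁ ⊗ σ₂) = (log σ₁) ⊗ I_p + I_m ⊗ (log σ₂), where ⊗ denotes the Kronecker product. -/
/-!
Diagonalising `σ₁ = U₁ D₁ U₁⋆` and `σ₂ = U₂ D₂ U₂⋆` gives
`σ₁ ⊗ σ₂ = (U₁ ⊗ U₂) (D₁ ⊗ D₂) (U₁ ⊗ U₂)⋆`, and on the diagonal `log (λ μ) = log λ + log μ`.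
The only subtle point is that `matLog` is defined through a *chosen* eigenbasis, so one needs
that `U f(D) U⋆` depends only on `U D U⋆`. This holds because `f` agrees with an interpolating
polynomial `q` on the finitely many diagonal entries, and `U q(D) U⋆ = q(U D U⋆)`.
-/

open Matrix
open scoped Kronecker ComplexOrder

/-- The matrix logarithm of a Hermitian complex matrix, defined via the functional calculus:
apply the real logarithm to the eigenvalues in a spectral decomposition.  (Junk value `0` on
non-Hermitian matrices.) -/
noncomputable def matLog {d : Type*} [Fintype d] [DecidableEq d]
    (A : Matrix d d ℂ) : Matrix d d ℂ :=
  if h : A.IsHermitian then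
    (h.eigenvectorUnitary : Matrix d d ℂ) *
      Matrix.diagonal (fun i => (Real.log (h.eigenvalues i) : ℂ)) *
      star (h.eigenvectorUnitary : Matrix d d ℂ)
  else 0

open Polynomial Unitary

theorem Polynomial.exists_eval_eqOn_of_finite {F : Type*} [Field F] {s : Set F} (hs : s.Finite)
    (f : F → F) : ∃ q : F[X], Set.EqOn (fun x => q.eval x) f s := by
  classical
  exact ⟨Lagrange.interpolate hs.toFinset id f, fun x hx =>
    Lagrange.eval_interpolate_at_node f (Set.injOn_id _) (hs.mem_toFinset.2 hx)⟩

namespace Matrix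

variable {m n 𝕜 : Type*} [Fintype m] [DecidableEq m] [Fintype n] [DecidableEq n] [RCLike 𝕜]

noncomputable def unitaryDiagonal (U : unitary (Matrix n n 𝕜)) : (n → ℝ) →⋆ₐ[ℝ] Matrix n n 𝕜 :=
  { ((conjStarAlgAut ℝ _ U).toAlgEquiv.toAlgHom.comp (diagonalAlgHom ℝ)).comp
      (AlgHom.compLeft (Algebra.ofId ℝ 𝕜) n) with
    map_star' d := by
      have hd : star (AlgHom.compLeft (Algebra.ofId ℝ 𝕜) n d) =
          AlgHom.compLeft (Algebra.ofId ℝ 𝕜) n d :=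
        funext fun i => RCLike.conj_ofReal (d i)
      simp [star_eq_conjTranspose, diagonal_conjTranspose, mul_assoc, hd] }

theorem unitaryDiagonal_apply (U : unitary (Matrix n n 𝕜)) (d : n → ℝ) :
    unitaryDiagonal U d = conjStarAlgAut 𝕜 _ U (diagonal (RCLike.ofReal ∘ d)) :=
  rfl

theorem IsHermitian.eq_unitaryDiagonal {A : Matrix n n 𝕜} (hA : A.IsHermitian) :
    A = unitaryDiagonal hA.eigenvectorUnitary hA.eigenvalues :=
  hA.spectral_theorem

theorem isHermitian_unitaryDiagonal (U : unitary (Matrix n n 𝕜)) (d : n → ℝ) :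
    (unitaryDiagonal U d).IsHermitian :=
  (IsSelfAdjoint.all d).map _

theorem aeval_unitaryDiagonal (U : unitary (Matrix n n 𝕜)) (d : n → ℝ) (q : ℝ[X]) :
    aeval (unitaryDiagonal U d) q = unitaryDiagonal U (fun i => q.eval (d i)) := by
  rw [← StarAlgHom.coe_toAlgHom, aeval_algHom_apply, aeval_pi_apply]
  rfl

theorem unitaryDiagonal_comp_eq_of_eq {U V : unitary (Matrix n n 𝕜)} {d e : n → ℝ}
    (h : unitaryDiagonal U d = unitaryDiagonal V e) (f : ℝ → ℝ) :
    unitaryDiagonal U (f ∘ d) = unitaryDiagonal V (f ∘ e) := by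
  obtain ⟨q, hq⟩ :=
    exists_eval_eqOn_of_finite ((Set.finite_range d).union (Set.finite_range e)) f
  have hd : f ∘ d = fun i => q.eval (d i) := funext fun i => (hq (.inl ⟨i, rfl⟩)).symm
  have he : f ∘ e = fun i => q.eval (e i) := funext fun i => (hq (.inr ⟨i, rfl⟩)).symm
  rw [hd, he, ← aeval_unitaryDiagonal, ← aeval_unitaryDiagonal, h]

def unitaryKronecker (U : unitary (Matrix m m 𝕜)) (V : unitary (Matrix n n 𝕜)) :
    unitary (Matrix (m × n) (m × n) 𝕜) :=
  ⟨(U : Matrix m m 𝕜) ⊗ₖ (V : Matrix n n 𝕜), kronecker_mem_unitary U.2 V.2⟩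

theorem unitaryDiagonal_kronecker (U : unitary (Matrix m m 𝕜)) (V : unitary (Matrix n n 𝕜))
    (d : m → ℝ) (e : n → ℝ) :
    unitaryDiagonal U d ⊗ₖ unitaryDiagonal V e =
      unitaryDiagonal (unitaryKronecker U V) (fun ij => d ij.1 * e ij.2) := by
  simp only [unitaryDiagonal_apply, conjStarAlgAut_apply, unitaryKronecker, mul_kronecker_mul,
    diagonal_kronecker_diagonal, star_eq_conjTranspose, conjTranspose_kronecker]
  congr
  funext ij
  simp

theorem unitaryDiagonal_kronecker_add (U : unitary (Matrix m m 𝕜)) (V : unitary (Matrix n n 𝕜))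
    (d : m → ℝ) (e : n → ℝ) :
    unitaryDiagonal (unitaryKronecker U V) (fun ij => d ij.1 + e ij.2) =
      unitaryDiagonal U d ⊗ₖ 1 + 1 ⊗ₖ unitaryDiagonal V e := by
  have hsplit : (fun ij : m × n => d ij.1 + e ij.2) =
      (fun ij => d ij.1 * (1 : n → ℝ) ij.2) + (fun ij => (1 : m → ℝ) ij.1 * e ij.2) := by
    funext ij
    simp
  rw [hsplit, map_add, ← unitaryDiagonal_kronecker, ← unitaryDiagonal_kronecker, map_one, map_one]

end Matrix

section matLog

variable {n : Type*} [Fintype n] [DecidableEq n]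

theorem Matrix.IsHermitian.matLog_eq {A : Matrix n n ℂ} (hA : A.IsHermitian) :
    matLog A = unitaryDiagonal hA.eigenvectorUnitary (Real.log ∘ hA.eigenvalues) := by
  rw [matLog, dif_pos hA]
  rfl

theorem matLog_unitaryDiagonal (U : unitary (Matrix n n ℂ)) (d : n → ℝ) :
    matLog (unitaryDiagonal U d) = unitaryDiagonal U (Real.log ∘ d) := by
  have hA := isHermitian_unitaryDiagonal U d
  rw [hA.matLog_eq]
  exact unitaryDiagonal_comp_eq_of_eq hA.eq_unitaryDiagonal.symm Real.log

end matLog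

/-- For positive definite Hermitian matrices `σ₁` (of size `m`) and `σ₂` (of size `p`),
`log (σ₁ ⊗ σ₂) = (log σ₁) ⊗ I + I ⊗ (log σ₂)`. -/
theorem matLog_kronecker {m p : ℕ}
    (σ₁ : Matrix (Fin m) (Fin m) ℂ) (σ₂ : Matrix (Fin p) (Fin p) ℂ)
    (hσ₁ : σ₁.PosDef) (hσ₂ : σ₂.PosDef) :
    matLog (σ₁ ⊗ₖ σ₂) =
      (matLog σ₁) ⊗ₖ (1 : Matrix (Fin p) (Fin p) ℂ) +
        (1 : Matrix (Fin m) (Fin m) ℂ) ⊗ₖ (matLog σ₂) := by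
  have h₁ := hσ₁.isHermitian
  have h₂ := hσ₂.isHermitian
  set U := unitaryKronecker h₁.eigenvectorUnitary h₂.eigenvectorUnitary
  calc matLog (σ₁ ⊗ₖ σ₂)
      = matLog (unitaryDiagonal U fun ij => h₁.eigenvalues ij.1 * h₂.eigenvalues ij.2) := by
        rw [← unitaryDiagonal_kronecker, ← h₁.eq_unitaryDiagonal, ← h₂.eq_unitaryDiagonal]
    _ = unitaryDiagonal U
          fun ij => Real.log (h₁.eigenvalues ij.1) + Real.log (h₂.eigenvalues ij.2) := by
        rw [matLog_unitaryDiagonal]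
        congr 1
        funext ij
        exact Real.log_mul (hσ₁.eigenvalues_pos ij.1).ne' (hσ₂.eigenvalues_pos ij.2).ne'
    _ = matLog σ₁ ⊗ₖ 1 + 1 ⊗ₖ matLog σ₂ := by
        rw [h₁.matLog_eq, h₂.matLog_eq, ← unitaryDiagonal_kronecker_add]
        rfl
end

section
/- For every real s > 0, the function α ↦ -[α·log(1 - e^{-s}) - log(1 - e^{-α·s})]/(1 - α) tends, as α → 1 from the left, to log(1 - e^{-s}) - s·e^{-s}/(1 - e^{-s}), which equals -H(e^{-s})/(1 - e^{-s}). -/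
/-! The numerator `g α = α log (1 - e^{-s}) - log (1 - e^{-αs})` vanishes at `α = 1`, so the
quotient is the difference quotient of `g` at `1` and its limit is `g'(1)`. -/

open Filter
open scoped Topology

/-- The Shannon function `H(p) = -p log p - (1-p) log (1-p)` (natural logarithm). -/
noncomputable def shannonH (p : ℝ) : ℝ :=
  -(p * Real.log p) - (1 - p) * Real.log (1 - p)

open Real

theorem tendsto_div_sub_of_hasDerivAt {𝕜 : Type*} [NontriviallyNormedField 𝕜] {f : 𝕜 → 𝕜}
    {f' a : 𝕜} (hf : HasDerivAt f f' a) (ha : f a = 0) :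
    Tendsto (fun x => f x / (x - a)) (𝓝[≠] a) (𝓝 f') := by
  refine (hasDerivAt_iff_tendsto_slope.mp hf).congr fun x => ?_
  rw [slope_def_field, ha, sub_zero]

theorem hasDerivAt_log_one_sub_exp_neg_mul {s x : ℝ} (hx : x * s ≠ 0) :
    HasDerivAt (fun α => log (1 - exp (-(α * s))))
      (s * exp (-(x * s)) / (1 - exp (-(x * s)))) x := by
  have hne : 1 - exp (-(x * s)) ≠ 0 := by
    rw [sub_ne_zero, ne_comm, Ne, exp_eq_one_iff, neg_eq_zero]
    exact hx
  have hlin : HasDerivAt (fun α => -(α * s)) (-s) x := (hasDerivAt_mul_const s).neg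
  convert (hlin.exp.const_sub 1).log hne using 1
  ring

theorem neg_shannonH_div_one_sub {p : ℝ} (hp : p ≠ 1) :
    -shannonH p / (1 - p) = log (1 - p) + p * log p / (1 - p) := by
  have : 1 - p ≠ 0 := sub_ne_zero.mpr hp.symm
  rw [shannonH]
  field_simp
  ring

/-- For `s > 0`, as `α → 1⁻` (within `(0,1)`),
`-[α log(1-e^{-s}) - log(1-e^{-αs})]/(1-α) → log(1-e^{-s}) - s e^{-s}/(1-e^{-s})`,
and this limit equals `-H(e^{-s})/(1-e^{-s})`. -/
theorem petz_renyi_RI_limit (s : ℝ) (hs : 0 < s) :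
    Tendsto
      (fun α : ℝ =>
        -(α * Real.log (1 - Real.exp (-s)) - Real.log (1 - Real.exp (-(α * s)))) / (1 - α))
      (nhdsWithin 1 (Set.Ioo (0 : ℝ) 1))
      (nhds (Real.log (1 - Real.exp (-s)) - s * Real.exp (-s) / (1 - Real.exp (-s)))) ∧
    Real.log (1 - Real.exp (-s)) - s * Real.exp (-s) / (1 - Real.exp (-s)) =
      -shannonH (Real.exp (-s)) / (1 - Real.exp (-s)) := by
  refine ⟨?_, ?_⟩
  · have hg : HasDerivAt (fun α => α * log (1 - exp (-s)) - log (1 - exp (-(α * s))))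
        (log (1 - exp (-s)) - s * exp (-s) / (1 - exp (-s))) 1 := by
      have hlog := hasDerivAt_log_one_sub_exp_neg_mul (x := 1) (by simpa using hs.ne')
      rw [one_mul] at hlog
      exact (hasDerivAt_mul_const _).sub hlog
    refine ((tendsto_div_sub_of_hasDerivAt hg (by simp)).mono_left
      (nhdsWithin_mono _ fun α hα => hα.2.ne)).congr fun α => ?_
    rw [neg_div, ← div_neg, neg_sub]
  · have hq : exp (-s) ≠ 1 := (exp_lt_one_iff.mpr (neg_neg_of_pos hs)).ne
    rw [neg_shannonH_div_one_sub hq, log_exp]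
    ring
end

section
/- Let n ≥ 1, let s, t : Fin n → ℝ with sₖ > 0 and tₖ > 0 for all k, let L be a real symplectic 2n×2n matrix (Lᵀ J L = J), and let m̃ ∈ ℝ^{2n}. For α ∈ (0,1) the matrix M(α) = Lᵀ·D(α·s)·L + D((1-α)·t) is positive definite, and the function α ↦ (1/(1-α))·m̃ᵀ·M(α)⁻¹·m̃ tends, as α → 1 from the left, to ∑ₖ tₖ·(m̃ₖ² + m̃_{n+k}²). -/
open Matrix Filter
open scoped Topology

/-- The real hyperbolic cotangent. -/
noncomputable def coth (x : ℝ) : ℝ := Real.cosh x / Real.sinh x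

/-- The canonical symplectic form `J = [[0, I], [-I, 0]]` as a `2n × 2n` real matrix. -/
noncomputable def symplecticJ (n : ℕ) : Matrix (Fin n ⊕ Fin n) (Fin n ⊕ Fin n) ℝ :=
  Matrix.fromBlocks 0 1 (-1) 0

/-- The `2n × 2n` diagonal matrix whose `k`-th and `(n+k)`-th diagonal entries both equal
`(1/2)·coth(rₖ/2)`. -/
noncomputable def Dmat (n : ℕ) (r : Fin n → ℝ) :
    Matrix (Fin n ⊕ Fin n) (Fin n ⊕ Fin n) ℝ :=
  Matrix.diagonal
    (Sum.elim (fun k => (1 / 2) * coth (r k / 2)) (fun k => (1 / 2) * coth (r k / 2)))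

/-!
Write `M(α) = Lᵀ D(αs) L + D((1-α)t)`. As `α → 1`, `D(αs)` stays bounded because `coth` is
continuous away from `0`, while `ε · ½ coth(εt/2) → 1/t` as `ε → 0` because `x coth x → 1`.
Hence `(1-α) M(α) → diag(1/t, 1/t)`, and by continuity of matrix inversion
`(1/(1-α)) m̃ᵀ M(α)⁻¹ m̃ = m̃ᵀ ((1-α) M(α))⁻¹ m̃ → m̃ᵀ diag(t, t) m̃`.
-/

lemma continuousAt_coth {x : ℝ} (hx : x ≠ 0) : ContinuousAt coth x :=
  Real.continuous_cosh.continuousAt.div Real.continuous_sinh.continuousAt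
    (Real.sinh_ne_zero.mpr hx)

lemma coth_pos {x : ℝ} (hx : 0 < x) : 0 < coth x :=
  div_pos (Real.cosh_pos x) (Real.sinh_pos_iff.mpr hx)

open Real in
lemma tendsto_sinh_div_self : Tendsto (fun x : ℝ => sinh x / x) (𝓝[≠] 0) (𝓝 1) := by
  have h := hasDerivAt_iff_tendsto_slope.mp (hasDerivAt_sinh 0)
  rw [cosh_zero] at h
  exact h.congr fun x => by simp [slope_def_field]

open Real in
lemma tendsto_mul_coth : Tendsto (fun x : ℝ => x * coth x) (𝓝[≠] 0) (𝓝 1) := by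
  have hcosh : Tendsto cosh (𝓝[≠] 0) (𝓝 1) := by
    simpa using continuous_cosh.continuousAt.tendsto.mono_left (nhdsWithin_le_nhds (a := 0))
  have h := hcosh.div tendsto_sinh_div_self one_ne_zero
  rw [div_one] at h
  refine h.congr' ?_
  filter_upwards [self_mem_nhdsWithin] with x (hx : x ≠ 0)
  simp only [Pi.div_apply, coth]
  field_simp

lemma tendsto_mul_const_nhdsNE_zero {c : ℝ} (hc : c ≠ 0) :
    Tendsto (fun x : ℝ => x * c) (𝓝[≠] 0) (𝓝[≠] 0) := by
  refine tendsto_nhdsWithin_of_tendsto_nhds_of_eventually_within _ ?_ ?_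
  · simpa using (continuous_mul_const c).continuousAt.tendsto.mono_left
      (nhdsWithin_le_nhds (a := (0 : ℝ)))
  · filter_upwards [self_mem_nhdsWithin] with x (hx : x ≠ 0)
    exact mul_ne_zero hx hc

lemma tendsto_mul_half_coth_mul_half {c : ℝ} (hc : c ≠ 0) :
    Tendsto (fun ε : ℝ => ε * ((1 / 2) * coth (ε * c / 2))) (𝓝[≠] 0) (𝓝 c⁻¹) := by
  have h := (tendsto_mul_coth.comp
    (tendsto_mul_const_nhdsNE_zero (div_ne_zero hc two_ne_zero))).const_mul c⁻¹
  rw [mul_one] at h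
  refine h.congr fun ε => ?_
  simp only [Function.comp_apply]
  field_simp

lemma Matrix.inv_smul₀ {ι K : Type*} [Fintype ι] [DecidableEq ι] [Field K]
    (c : K) (A : Matrix ι ι K) : (c • A)⁻¹ = c⁻¹ • A⁻¹ := by
  rcases eq_or_ne c 0 with rfl | hc
  · simp
  by_cases hA : IsUnit A.det
  · exact inv_smul' A (Units.mk0 c hc) hA
  · have hcA : ¬IsUnit (c • A).det := by
      rw [det_smul, IsUnit.mul_iff, not_and_or]
      exact Or.inr hA
    rw [nonsing_inv_apply_not_isUnit _ hA, nonsing_inv_apply_not_isUnit _ hcA, smul_zero]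

lemma Matrix.inv_diagonal_of_ne_zero {ι K : Type*} [Fintype ι] [DecidableEq ι] [Field K]
    {d : ι → K} (hd : ∀ i, d i ≠ 0) : (diagonal d)⁻¹ = diagonal d⁻¹ := by
  refine inv_eq_right_inv ?_
  rw [diagonal_mul_diagonal, ← diagonal_one]
  exact congrArg diagonal (funext fun i => mul_inv_cancel₀ (hd i))

lemma Matrix.dotProduct_diagonal_mulVec_self {ι R : Type*} [Fintype ι] [DecidableEq ι]
    [CommSemiring R] (d v : ι → R) : v ⬝ᵥ diagonal d *ᵥ v = ∑ i, d i * v i ^ 2 := by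
  simp only [dotProduct, mulVec_diagonal]
  exact Finset.sum_congr rfl fun i _ => by ring

lemma Filter.Tendsto.dotProduct_inv_mulVec {X ι K : Type*} [Fintype ι] [DecidableEq ι] [Field K]
    [TopologicalSpace K] [IsTopologicalDivisionRing K]
    {l : Filter X} {A : X → Matrix ι ι K} {T : Matrix ι ι K} (hA : Tendsto A l (𝓝 T))
    (hT : T.det ≠ 0) (v : ι → K) :
    Tendsto (fun x => v ⬝ᵥ (A x)⁻¹ *ᵥ v) l (𝓝 (v ⬝ᵥ T⁻¹ *ᵥ v)) := by
  have hinv : ContinuousAt Inv.inv T :=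
    continuousAt_matrix_inv T (by rw [Ring.inverse_eq_inv']; exact continuousAt_inv₀ hT)
  have hquad : Continuous fun B : Matrix ι ι K => v ⬝ᵥ B *ᵥ v :=
    continuous_const.dotProduct (continuous_id.matrix_mulVec continuous_const)
  exact (hquad.tendsto _).comp (hinv.tendsto.comp hA)

lemma Dmat_posDef {n : ℕ} {r : Fin n → ℝ} (hr : ∀ k, 0 < r k) : (Dmat n r).PosDef := by
  rw [Dmat, posDef_diagonal_iff]
  rintro (k | k) <;> exact mul_pos one_half_pos (coth_pos (half_pos (hr k)))

lemma continuousAt_Dmat {n : ℕ} {r : Fin n → ℝ} (hr : ∀ k, r k ≠ 0) :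
    ContinuousAt (Dmat n) r := by
  have hcoeff (k : Fin n) : ContinuousAt (fun r : Fin n → ℝ => (1 / 2) * coth (r k / 2)) r :=
    continuousAt_const.mul <| (continuousAt_coth (div_ne_zero (hr k) two_ne_zero)).comp
      (f := fun r : Fin n → ℝ => r k / 2) ((continuous_apply k).div_const 2).continuousAt
  refine continuous_id.matrix_diagonal.continuousAt.comp (continuousAt_pi.mpr ?_)
  rintro (k | k) <;> exact hcoeff k

lemma tendsto_smul_Dmat_smul {n : ℕ} {t : Fin n → ℝ} (ht : ∀ k, t k ≠ 0) :
    Tendsto (fun ε : ℝ => ε • Dmat n (ε • t)) (𝓝[≠] 0) (𝓝 (diagonal (Sum.elim t⁻¹ t⁻¹))) := by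
  simp only [Dmat, ← diagonal_smul]
  refine (continuous_id.matrix_diagonal.tendsto _).comp (tendsto_pi_nhds.mpr ?_)
  rintro (k | k) <;> exact tendsto_mul_half_coth_mul_half (ht k)

lemma posDef_transpose_mul_Dmat_mul_add_Dmat {n : ℕ} {r q : Fin n → ℝ} (hr : ∀ k, 0 < r k)
    (hq : ∀ k, 0 < q k) (L : Matrix (Fin n ⊕ Fin n) (Fin n ⊕ Fin n) ℝ) :
    (Lᵀ * Dmat n r * L + Dmat n q).PosDef := by
  have h := (Dmat_posDef hr).posSemidef.conjTranspose_mul_mul_same L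
  rw [conjTranspose_eq_transpose_of_trivial] at h
  exact PosDef.posSemidef_add h (Dmat_posDef hq)

lemma tendsto_one_sub_smul_transpose_mul_Dmat_mul_add_Dmat {n : ℕ} {s t : Fin n → ℝ}
    (hs : ∀ k, s k ≠ 0) (ht : ∀ k, t k ≠ 0) (L : Matrix (Fin n ⊕ Fin n) (Fin n ⊕ Fin n) ℝ) :
    Tendsto (fun α : ℝ => (1 - α) • (Lᵀ * Dmat n (α • s) * L + Dmat n ((1 - α) • t)))
      (𝓝[≠] 1) (𝓝 (diagonal (Sum.elim t⁻¹ t⁻¹))) := by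
  have hgap : Tendsto (fun α : ℝ => 1 - α) (𝓝[≠] 1) (𝓝[≠] 0) := by
    refine tendsto_nhdsWithin_of_tendsto_nhds_of_eventually_within _ ?_ ?_
    · rw [← sub_self (1 : ℝ)]
      exact (tendsto_const_nhds.sub tendsto_id).mono_left nhdsWithin_le_nhds
    · filter_upwards [self_mem_nhdsWithin] with α (hα : α ≠ 1)
      exact sub_ne_zero.mpr (Ne.symm hα)
  have hconj : ContinuousAt (fun α : ℝ => Lᵀ * Dmat n (α • s) * L) 1 := by
    refine (continuousAt_const.mul ?_).mul continuousAt_const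
    refine ContinuousAt.comp (g := Dmat n) ?_ (continuous_id.smul continuous_const).continuousAt
    simpa using continuousAt_Dmat hs
  have hvanish := (hgap.mono_right nhdsWithin_le_nhds).smul
    (hconj.tendsto.mono_left nhdsWithin_le_nhds)
  rw [zero_smul] at hvanish
  simpa only [smul_add, zero_add, Function.comp_def] using
    hvanish.add ((tendsto_smul_Dmat_smul ht).comp hgap)

theorem petz_renyi_RIII_limit_general (n : ℕ)
    (s t : Fin n → ℝ) (hs : ∀ k, 0 < s k) (ht : ∀ k, 0 < t k)
    (L : Matrix (Fin n ⊕ Fin n) (Fin n ⊕ Fin n) ℝ)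
    (mt : Fin n ⊕ Fin n → ℝ) :
    (∀ α ∈ Set.Ioo (0 : ℝ) 1,
        (Lᵀ * Dmat n (α • s) * L + Dmat n ((1 - α) • t)).PosDef) ∧
    Tendsto
      (fun α : ℝ =>
        (1 / (1 - α)) *
          (mt ⬝ᵥ (Lᵀ * Dmat n (α • s) * L + Dmat n ((1 - α) • t))⁻¹ *ᵥ mt))
      (nhdsWithin 1 (Set.Ioo (0 : ℝ) 1))
      (nhds (∑ k : Fin n, t k * ((mt (Sum.inl k)) ^ 2 + (mt (Sum.inr k)) ^ 2))) := by
  refine ⟨fun α ⟨hα0, hα1⟩ => posDef_transpose_mul_Dmat_mul_add_Dmat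
    (fun k => mul_pos hα0 (hs k)) (fun k => mul_pos (sub_pos.mpr hα1) (ht k)) L, ?_⟩
  have ht0 (k : Fin n) : t k ≠ 0 := (ht k).ne'
  have hdiag : ∀ i, (Sum.elim t⁻¹ t⁻¹) i ≠ 0 := by
    rintro (k | k) <;> exact inv_ne_zero (ht0 k)
  have hN := tendsto_one_sub_smul_transpose_mul_Dmat_mul_add_Dmat (fun k => (hs k).ne') ht0 L
    |>.mono_left (nhdsWithin_mono 1 fun α (hα : α ∈ Set.Ioo 0 1) => hα.2.ne)
  have hlim := hN.dotProduct_inv_mulVec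
    (by simpa [det_diagonal, Finset.prod_ne_zero_iff] using hdiag) mt
  rw [inv_diagonal_of_ne_zero hdiag, dotProduct_diagonal_mulVec_self, Fintype.sum_sum_type,
    ← Finset.sum_add_distrib] at hlim
  convert hlim using 2 with α
  · rw [inv_smul₀, smul_mulVec, dotProduct_smul, smul_eq_mul, one_div]
  · simp only [Pi.inv_apply, Sum.elim_inl, Sum.elim_inr, inv_inv, mul_add]

/-- For `sₖ, tₖ > 0`, `L` symplectic and `m̃ ∈ ℝ^{2n}`, the matrix
`M(α) = Lᵀ·D(αs)·L + D((1-α)t)` is positive definite for `α ∈ (0,1)`, and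
`(1/(1-α))·m̃ᵀ M(α)⁻¹ m̃ → ∑ₖ tₖ (m̃ₖ² + m̃_{n+k}²)` as `α → 1⁻`. -/
theorem petz_renyi_RIII_limit (n : ℕ) (hn : 1 ≤ n)
    (s t : Fin n → ℝ) (hs : ∀ k, 0 < s k) (ht : ∀ k, 0 < t k)
    (L : Matrix (Fin n ⊕ Fin n) (Fin n ⊕ Fin n) ℝ)
    (hL : Lᵀ * symplecticJ n * L = symplecticJ n)
    (mt : Fin n ⊕ Fin n → ℝ) :
    (∀ α ∈ Set.Ioo (0 : ℝ) 1,
        (Lᵀ * Dmat n (α • s) * L + Dmat n ((1 - α) • t)).PosDef) ∧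
    Tendsto
      (fun α : ℝ =>
        (1 / (1 - α)) *
          (mt ⬝ᵥ (Lᵀ * Dmat n (α • s) * L + Dmat n ((1 - α) • t))⁻¹ *ᵥ mt))
      (nhdsWithin 1 (Set.Ioo (0 : ℝ) 1))
      (nhds (∑ k : Fin n, t k * ((mt (Sum.inl k)) ^ 2 + (mt (Sum.inr k)) ^ 2))) :=
  petz_renyi_RIII_limit_general n s t hs ht L mt
end

section
/- Let n ≥ 1, let s, t : Fin n → ℝ with sₖ > 0 and tₖ > 0 for all k, and let L be a real symplectic 2n×2n matrix (Lᵀ J L = J). Then the function α ↦ (1/(2(1-α)))·log det(I_{2n} + D((1-α)·t)^{-1/2} · Lᵀ·D(α·s)·L · D((1-α)·t)^{-1/2}) tends, as α → 1 from the left, to (1/2)·∑ₖ tₖ·[(Lᵀ·D(s)·L)ₖₖ + (Lᵀ·D(s)·L)_{n+k,n+k}]. -/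
open Matrix Filter
open scoped Topology

/-- The inverse square root `D(r)^{-1/2}`: the diagonal matrix whose `k`-th and `(n+k)`-th
diagonal entries both equal `((1/2)·coth(rₖ/2))^{-1/2}`. -/
noncomputable def DmatInvSqrt (n : ℕ) (r : Fin n → ℝ) :
    Matrix (Fin n ⊕ Fin n) (Fin n ⊕ Fin n) ℝ :=
  Matrix.diagonal
    (Sum.elim (fun k => (Real.sqrt ((1 / 2) * coth (r k / 2)))⁻¹)
      (fun k => (Real.sqrt ((1 / 2) * coth (r k / 2)))⁻¹))

/-!
Write `S = D((1-α)t)^{-1/2}` and `M(α) = Lᵀ D(αs) L`. Sylvester's identity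
`det (1 + S M S) = det (1 + S² M)` and `(½ coth x)⁻¹ = 2 tanh x` turn the determinant into
`g(α) = det (1 + diag(τ(α)) M(α))` with `τ_c(α) = 2 tanh((1-α) t_c / 2)`. Since `τ(1) = 0`, the
Leibniz expansion shows `g(1) = 1` and `g'(1) = ∑_c τ_c'(1) M(1)_cc = -∑_c t_c M(1)_cc`, so the
quantity, which equals `-½ · log g(α) / (α - 1)`, tends to `-½ (log g)'(1)`.
-/

lemma Equiv.Perm.exists_ne_apply_ne_of_ne_one {ι : Type*} {σ : Equiv.Perm ι} (hσ : σ ≠ 1)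
    (i : ι) : ∃ j, j ≠ i ∧ σ j ≠ j := by
  obtain ⟨a, ha⟩ : ∃ a, σ a ≠ a := by
    by_contra! h
    exact hσ (Equiv.ext h)
  by_cases hai : a = i
  · subst hai
    exact ⟨σ a, ha, fun h => ha (σ.injective h)⟩
  · exact ⟨a, hai, ha⟩

theorem hasDerivAt_det_one_add_of_eq_zero {𝕜 ι : Type*} [NontriviallyNormedField 𝕜]
    [Fintype ι] [DecidableEq ι] {A : 𝕜 → Matrix ι ι 𝕜} {A' : Matrix ι ι 𝕜} {x : 𝕜}
    (hA : ∀ i j, HasDerivAt (fun y => A y i j) (A' i j) x) (hx : A x = 0) :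
    HasDerivAt (fun y => (1 + A y).det) A'.trace x := by
  have hentry (i j : ι) : HasDerivAt (fun y => (1 + A y) i j) (A' i j) x :=
    (hA i j).const_add _
  simp_rw [det_apply']
  have hterm (σ : Equiv.Perm ι) := (HasDerivAt.fun_finsetProd (u := Finset.univ)
    fun i _ => hentry (σ i) i).const_mul ((Equiv.Perm.sign σ : ℤ) : 𝕜)
  refine (HasDerivAt.fun_sum fun σ _ => hterm σ).congr_deriv ?_
  rw [Finset.sum_eq_single (1 : Equiv.Perm ι), hx, add_zero]
  · simp only [Equiv.Perm.sign_one, Units.val_one, Int.cast_one, one_mul, trace, diag]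
    refine Finset.sum_congr rfl fun i _ => ?_
    have hprod : ∏ j ∈ Finset.univ.erase i, (1 : Matrix ι ι 𝕜) ((1 : Equiv.Perm ι) j) j = 1 :=
      Finset.prod_eq_one fun j _ => one_apply_eq j
    rw [hprod, one_smul]
    rfl
  · intro σ _ hσ
    refine mul_eq_zero_of_right _ (Finset.sum_eq_zero fun i _ => smul_eq_zero_of_left ?_ _)
    obtain ⟨j, hji, hj⟩ := σ.exists_ne_apply_ne_of_ne_one hσ i
    exact Finset.prod_eq_zero (Finset.mem_erase.mpr ⟨hji, Finset.mem_univ j⟩)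
      (by rw [hx, add_zero, one_apply_ne hj])
  · simp

theorem hasDerivAt_det_one_add_diagonal_mul_of_eq_zero {𝕜 ι : Type*} [NontriviallyNormedField 𝕜]
    [Fintype ι] [DecidableEq ι] {τ : 𝕜 → ι → 𝕜} {τ' : ι → 𝕜} {M : 𝕜 → Matrix ι ι 𝕜} {x : 𝕜}
    (hτ : ∀ i, HasDerivAt (fun y => τ y i) (τ' i) x) (hτx : τ x = 0)
    (hM : ∀ i j, DifferentiableAt 𝕜 (fun y => M y i j) x) :
    HasDerivAt (fun y => (1 + diagonal (τ y) * M y).det) (∑ i, τ' i * M x i i) x := by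
  refine hasDerivAt_det_one_add_of_eq_zero (A' := of fun i j => τ' i * M x i j)
    (fun i j => ?_) (by simp [hτx])
  simp only [diagonal_mul, of_apply]
  exact ((hτ i).mul (hM i j).hasDerivAt).congr_deriv (by simp [hτx])

lemma Real.tendsto_log_div_sub_of_hasDerivAt {g : ℝ → ℝ} {d x : ℝ} (hg : HasDerivAt g d x)
    (hgx : g x = 1) : Tendsto (fun y => Real.log (g y) / (y - x)) (𝓝[≠] x) (𝓝 d) := by
  have hlog : HasDerivAt (fun y => Real.log (g y)) d x := by
    simpa [hgx] using hg.log (by rw [hgx]; exact one_ne_zero)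
  refine (hasDerivAt_iff_tendsto_slope.mp hlog).congr fun y => ?_
  simp [slope_def_field, hgx]

lemma Real.hasDerivAt_tanh (x : ℝ) : HasDerivAt Real.tanh (Real.cosh x ^ 2)⁻¹ x := by
  have h := (Real.hasDerivAt_sinh x).div (Real.hasDerivAt_cosh x) (Real.cosh_pos x).ne'
  rw [show Real.tanh = Real.sinh / Real.cosh from funext Real.tanh_eq_sinh_div_cosh]
  refine h.congr_deriv ?_
  field_simp
  linear_combination Real.cosh_sq x

lemma hasDerivAt_two_mul_tanh_one_sub_mul_div_two (a : ℝ) :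
    HasDerivAt (fun α => 2 * Real.tanh ((1 - α) * a / 2)) (-a) 1 := by
  have hin := (((hasDerivAt_id (1 : ℝ)).const_sub 1).mul_const a).div_const 2
  refine (((Real.hasDerivAt_tanh _).comp 1 hin).const_mul 2).congr_deriv ?_
  simp only [id, sub_self, zero_mul, zero_div, Real.cosh_zero, one_pow, inv_one]
  ring

lemma differentiableAt_coth {x : ℝ} (hx : x ≠ 0) : DifferentiableAt ℝ coth x := by
  unfold coth
  fun_prop (disch := exact Real.sinh_ne_zero.mpr hx)

lemma inv_sqrt_half_coth_mul_self {x : ℝ} (hx : 0 < x) :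
    (√(1 / 2 * coth x))⁻¹ * (√(1 / 2 * coth x))⁻¹ = 2 * Real.tanh x := by
  have hcoth : 0 < coth x := div_pos (Real.cosh_pos x) (Real.sinh_pos_iff.mpr hx)
  rw [← mul_inv, Real.mul_self_sqrt (by positivity), coth, Real.tanh_eq_sinh_div_cosh]
  field_simp

lemma Dmat_eq_diagonal (n : ℕ) (r : Fin n → ℝ) :
    Dmat n r = diagonal fun c => 1 / 2 * coth (Sum.elim r r c / 2) := by
  unfold Dmat
  congr 1
  ext (k | k) <;> rfl

lemma DmatInvSqrt_mul_self {n : ℕ} {r : Fin n → ℝ} (hr : ∀ k, 0 < r k) :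
    DmatInvSqrt n r * DmatInvSqrt n r = diagonal fun c => 2 * Real.tanh (Sum.elim r r c / 2) := by
  rw [DmatInvSqrt, diagonal_mul_diagonal]
  congr 1
  ext (k | k) <;> exact inv_sqrt_half_coth_mul_self (half_pos (hr k))

lemma det_one_add_DmatInvSqrt_mul_mul_DmatInvSqrt {n : ℕ} {r : Fin n → ℝ} (hr : ∀ k, 0 < r k)
    (M : Matrix (Fin n ⊕ Fin n) (Fin n ⊕ Fin n) ℝ) :
    (1 + DmatInvSqrt n r * M * DmatInvSqrt n r).det
      = (1 + diagonal (fun c => 2 * Real.tanh (Sum.elim r r c / 2)) * M).det := by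
  rw [det_one_add_mul_comm, ← Matrix.mul_assoc, DmatInvSqrt_mul_self hr]

lemma differentiableAt_transpose_mul_Dmat_smul_mul_apply {n : ℕ} {s : Fin n → ℝ}
    (hs : ∀ k, s k ≠ 0) (L : Matrix (Fin n ⊕ Fin n) (Fin n ⊕ Fin n) ℝ) (i j : Fin n ⊕ Fin n)
    {x : ℝ} (hx : x ≠ 0) : DifferentiableAt ℝ (fun α => (Lᵀ * Dmat n (α • s) * L) i j) x := by
  simp only [Dmat_eq_diagonal, mul_apply, transpose_apply, diagonal_apply, mul_ite, mul_zero,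
    Finset.sum_ite_eq', Finset.mem_univ, if_true]
  have hcoth (c : Fin n ⊕ Fin n) :
      DifferentiableAt ℝ (fun α => coth (Sum.elim (α • s) (α • s) c / 2)) x := by
    rcases c with k | k <;>
      simp only [Sum.elim_inl, Sum.elim_inr, Pi.smul_apply, smul_eq_mul] <;>
      exact (differentiableAt_coth (by simp [hx, hs k])).comp x (by fun_prop)
  fun_prop

theorem petz_renyi_RIV_det_limit_general (n : ℕ)
    (s t : Fin n → ℝ) (hs : ∀ k, 0 < s k) (ht : ∀ k, 0 < t k)
    (L : Matrix (Fin n ⊕ Fin n) (Fin n ⊕ Fin n) ℝ) :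
    Tendsto
      (fun α : ℝ =>
        (1 / (2 * (1 - α))) *
          Real.log
            ((1 + DmatInvSqrt n ((1 - α) • t) * (Lᵀ * Dmat n (α • s) * L) *
                DmatInvSqrt n ((1 - α) • t)).det))
      (nhdsWithin 1 (Set.Ioo (0 : ℝ) 1))
      (nhds ((1 / 2) * ∑ k : Fin n,
        t k * ((Lᵀ * Dmat n s * L) (Sum.inl k) (Sum.inl k)
          + (Lᵀ * Dmat n s * L) (Sum.inr k) (Sum.inr k)))) := by
  set M : ℝ → Matrix (Fin n ⊕ Fin n) (Fin n ⊕ Fin n) ℝ := fun α => Lᵀ * Dmat n (α • s) * L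
  set τ : ℝ → Fin n ⊕ Fin n → ℝ := fun α c => 2 * Real.tanh ((1 - α) * Sum.elim t t c / 2)
  set g : ℝ → ℝ := fun α => (1 + diagonal (τ α) * M α).det
  have hg : HasDerivAt g (∑ c, -Sum.elim t t c * M 1 c c) 1 :=
    hasDerivAt_det_one_add_diagonal_mul_of_eq_zero
      (fun c => hasDerivAt_two_mul_tanh_one_sub_mul_div_two _) (by ext; simp [τ])
      fun i j => differentiableAt_transpose_mul_Dmat_smul_mul_apply (fun k => (hs k).ne') L i j
        one_ne_zero
  have hlim := (Real.tendsto_log_div_sub_of_hasDerivAt hg (by simp [g, τ])).mono_left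
    (nhdsWithin_mono _ fun α (hα : α ∈ Set.Ioo (0 : ℝ) 1) => hα.2.ne)
  have hval : (1 / 2) * ∑ k : Fin n, t k * ((Lᵀ * Dmat n s * L) (Sum.inl k) (Sum.inl k)
      + (Lᵀ * Dmat n s * L) (Sum.inr k) (Sum.inr k))
      = -(1 / 2) * ∑ c, -Sum.elim t t c * M 1 c c := by
    simp only [M, one_smul, Fintype.sum_sum_type, Sum.elim_inl, Sum.elim_inr, mul_add,
      Finset.sum_add_distrib, neg_mul, Finset.sum_neg_distrib]
    ring
  rw [hval]
  refine (hlim.const_mul _).congr' ?_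
  filter_upwards [self_mem_nhdsWithin] with α hα
  have hdet : (1 + DmatInvSqrt n ((1 - α) • t) * M α * DmatInvSqrt n ((1 - α) • t)).det = g α := by
    rw [det_one_add_DmatInvSqrt_mul_mul_DmatInvSqrt (r := (1 - α) • t)
      fun k => mul_pos (sub_pos.2 hα.2) (ht k)]
    congr 3
    ext (k | k) <;> rfl
  rw [hdet]
  field_simp [sub_ne_zero.2 hα.2.ne, sub_ne_zero.2 hα.2.ne']
  ring

/-- For `sₖ, tₖ > 0` and `L` symplectic,
`(1/(2(1-α)))·log det(I + D((1-α)t)^{-1/2} Lᵀ D(αs) L D((1-α)t)^{-1/2})`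
tends, as `α → 1⁻`, to `(1/2)·∑ₖ tₖ [(Lᵀ D(s) L)ₖₖ + (Lᵀ D(s) L)_{n+k,n+k}]`. -/
theorem petz_renyi_RIV_det_limit (n : ℕ) (hn : 1 ≤ n)
    (s t : Fin n → ℝ) (hs : ∀ k, 0 < s k) (ht : ∀ k, 0 < t k)
    (L : Matrix (Fin n ⊕ Fin n) (Fin n ⊕ Fin n) ℝ)
    (hL : Lᵀ * symplecticJ n * L = symplecticJ n) :
    Tendsto
      (fun α : ℝ =>
        (1 / (2 * (1 - α))) *
          Real.log
            ((1 + DmatInvSqrt n ((1 - α) • t) * (Lᵀ * Dmat n (α • s) * L) *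
                DmatInvSqrt n ((1 - α) • t)).det))
      (nhdsWithin 1 (Set.Ioo (0 : ℝ) 1))
      (nhds ((1 / 2) * ∑ k : Fin n,
        t k * ((Lᵀ * Dmat n s * L) (Sum.inl k) (Sum.inl k)
          + (Lᵀ * Dmat n s * L) (Sum.inr k) (Sum.inr k)))) :=
  petz_renyi_RIV_det_limit_general n s t hs ht L
end
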